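/- Exact contraction of the qubit amplitude damping semigroup: Let ℒ be the qubit amplitude damping Liouvillian with rate γ > 0. Then sup_{ρ ∈ S_2} d_tr(e^{tℒ}(ρ), |0⟩⟨0|) = e^{−γt} for 0 ≤ t ≤ (log 2)/γ, and sup_{ρ ∈ S_2} d_tr(e^{tℒ}(ρ), |0⟩⟨0|) = e^{−γt/2}/√(4(1 − e^{−γt})) for t ≥ (log 2)/γ. In particular, the contraction decays asymptotically as e^{−γt/2} and not as e^{−γt}. -/

import Mathlib

open scoped Matrix ComplexOrder
open Matrix

/-- The square root of a positive semidefinite matrix, as defined in Mathlib (Dec 2024)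
(`Matrix.PosSemidef.sqrt`, since removed), restored verbatim. -/
noncomputable def Matrix.PosSemidef.sqrt {𝕜 n : Type*} [RCLike 𝕜] [Fintype n] [DecidableEq n]
    {A : Matrix n n 𝕜} (hA : A.PosSemidef) : Matrix n n 𝕜 :=
  hA.1.eigenvectorUnitary.1 * diagonal ((↑) ∘ (√·) ∘ hA.1.eigenvalues) *
  (star hA.1.eigenvectorUnitary : Matrix n n 𝕜)

section Defs

variable {m : Type*}

/-- The trace norm `‖X‖₁ = tr √(XᴴX)`. -/
noncomputable def traceNorm [Fintype m] [DecidableEq m] (X : Matrix m m ℂ) : ℝ :=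
  ((Matrix.posSemidef_conjTranspose_mul_self X).sqrt.trace).re

/-- The trace distance `d_tr(ρ,σ) = ‖ρ - σ‖₁ / 2`. -/
noncomputable def trDist [Fintype m] [DecidableEq m] (ρ σ : Matrix m m ℂ) : ℝ :=
  traceNorm (ρ - σ) / 2

/-- A density matrix: positive semidefinite (hence Hermitian) with unit trace. -/
def IsDensityMatrix [Fintype m] (ρ : Matrix m m ℂ) : Prop :=
  ρ.PosSemidef ∧ ρ.trace = 1

/-- Apply a superoperator, given by its matrix representation
(rows/columns indexed by matrix entry positions), to a matrix. -/
noncomputable def appS [Fintype m] (S : Matrix (m × m) (m × m) ℂ) (ρ : Matrix m m ℂ) :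
    Matrix m m ℂ :=
  Matrix.of fun i j => ∑ p : m × m, S (i, j) p * ρ p.1 p.2

/-- The Choi matrix of a superoperator. -/
def choiMatrix [Fintype m] (S : Matrix (m × m) (m × m) ℂ) : Matrix (m × m) (m × m) ℂ :=
  Matrix.of fun p q => S (p.2, q.2) (p.1, q.1)

/-- Quantum channel: completely positive (positive semidefinite Choi matrix)
and trace preserving. -/
def IsQChannelM [Fintype m] (S : Matrix (m × m) (m × m) ℂ) : Prop :=
  (choiMatrix S).PosSemidef ∧ ∀ X : Matrix m m ℂ, (appS S X).trace = X.trace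

/-- `expS t L` is the superoperator `e^{tL}`. -/
noncomputable def expS [Fintype m] [DecidableEq m] (t : ℝ) (L : Matrix (m × m) (m × m) ℂ) :
    Matrix (m × m) (m × m) ℂ :=
  NormedSpace.exp ((t : ℂ) • L)

/-- A Liouvillian: `e^{tL}` is a quantum channel for every `t ≥ 0`. -/
def IsLiouvillianM [Fintype m] [DecidableEq m] (L : Matrix (m × m) (m × m) ℂ) : Prop :=
  ∀ t : ℝ, 0 ≤ t → IsQChannelM (expS t L)

/-- `lam` is the spectral gap of the Liouvillian `L`:
`lam = inf {|Re μ| : μ eigenvalue of L, Re μ < 0}` (and such an eigenvalue exists). -/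
def IsGapOf [Fintype m] [DecidableEq m] (L : Matrix (m × m) (m × m) ℂ) (lam : ℝ) : Prop :=
  (∃ μ ∈ spectrum ℂ L, μ.re < 0) ∧
  lam = sInf {r : ℝ | ∃ μ ∈ spectrum ℂ L, μ.re < 0 ∧ r = -μ.re}

/-- `Tφ` is the peripheral evolution `T_{φ,t} = Σ_{k : Re λ_k = 0} e^{tλ_k} P_k` of the
semigroup generated by `L`: it acts as `e^{tμ}` on each generalized eigenspace of `L` with
`Re μ = 0`, and as `0` on each generalized eigenspace with `Re μ < 0`. -/
def IsPeriphEvolAt [Fintype m] (L : Matrix (m × m) (m × m) ℂ) (t : ℝ)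
    (Tφ : Matrix (m × m) (m × m) ℂ) : Prop :=
  (∀ μ : ℂ, μ.re = 0 → ∀ v ∈ Module.End.maxGenEigenspace (Matrix.mulVecLin L) μ,
      Tφ.mulVec v = Complex.exp (t * μ) • v) ∧
  (∀ μ : ℂ, μ.re < 0 → ∀ v ∈ Module.End.maxGenEigenspace (Matrix.mulVecLin L) μ,
      Tφ.mulVec v = 0)

/-- `Tφ` is the peripheral projection `T_φ = Σ_{k : |μ_k| = 1} μ_k P_k` of the channel `T`:
it acts as `μ •` on each generalized eigenspace of `T` with `|μ| = 1`, and as `0` on each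
generalized eigenspace with `|μ| < 1`. -/
def IsPeriphProjM [Fintype m] (T Tφ : Matrix (m × m) (m × m) ℂ) : Prop :=
  (∀ μ : ℂ, ‖μ‖ = 1 → ∀ v ∈ Module.End.maxGenEigenspace (Matrix.mulVecLin T) μ,
      Tφ.mulVec v = μ • v) ∧
  (∀ μ : ℂ, ‖μ‖ < 1 → ∀ v ∈ Module.End.maxGenEigenspace (Matrix.mulVecLin T) μ,
      Tφ.mulVec v = 0)

/-- The trace-norm contraction `η_tr[T] = sup_ρ d_tr(T(ρ), Tφ(ρ))` over density matrices. -/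
noncomputable def etaTR [Fintype m] [DecidableEq m] (T Tφ : Matrix (m × m) (m × m) ℂ) : ℝ :=
  ⨆ ρ : {ρ : Matrix m m ℂ // IsDensityMatrix ρ}, trDist (appS T ρ.1) (appS Tφ ρ.1)

open scoped Classical in
/-- Matrix square root of a positive semidefinite matrix (junk value `0` otherwise). -/
noncomputable def msqrt [Fintype m] [DecidableEq m] (A : Matrix m m ℂ) : Matrix m m ℂ :=
  if h : A.PosSemidef then h.sqrt else 0

/-- The fidelity `F(ρ,σ) = tr √(√ρ σ √ρ)`. -/
noncomputable def fidelity [Fintype m] [DecidableEq m] (ρ σ : Matrix m m ℂ) : ℝ :=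
  ((msqrt (msqrt ρ * σ * msqrt ρ)).trace).re

/-- The Bures distance `d_B(ρ,σ) = √(1 - F(ρ,σ))`. -/
noncomputable def buresDist [Fintype m] [DecidableEq m] (ρ σ : Matrix m m ℂ) : ℝ :=
  Real.sqrt (1 - fidelity ρ σ)

/-- The Frobenius (Hilbert-Schmidt) norm `‖X‖₂ = √(tr XᴴX)`. -/
noncomputable def frobNorm [Fintype m] (X : Matrix m m ℂ) : ℝ :=
  Real.sqrt ((Xᴴ * X).trace.re)

/-- The operator (spectral) norm `‖A‖_∞`. -/
noncomputable def specNorm [Fintype m] [DecidableEq m] (A : Matrix m m ℂ) : ℝ :=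
  ‖(Matrix.toEuclideanLin A).toContinuousLinearMap‖

/-- The superoperator norm `‖S‖_{2→2} = sup {‖S(X)‖₂ : ‖X‖₂ ≤ 1}` induced by the
Frobenius norm. -/
noncomputable def superNorm22 [Fintype m] (S : Matrix (m × m) (m × m) ℂ) : ℝ :=
  ⨆ X : {X : Matrix m m ℂ // frobNorm X ≤ 1}, frobNorm (appS S X.1)

/-- The dual (Heisenberg-picture) superoperator `S*`, satisfying
`tr[A S*(B)] = tr[S(A) B]`. -/
def dualS [Fintype m] (S : Matrix (m × m) (m × m) ℂ) : Matrix (m × m) (m × m) ℂ :=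
  Matrix.of fun p q => S (q.2, q.1) (p.2, p.1)

/-- Matrix representation of the superoperator `ρ ↦ A ρ B`. -/
def sandwichS [Fintype m] (A B : Matrix m m ℂ) : Matrix (m × m) (m × m) ℂ :=
  Matrix.of fun p q => A p.1 q.1 * B q.2 p.2

/-- The Lindblad dissipator `ρ ↦ L ρ L† − (1/2)L†L ρ − (1/2)ρ L†L` in matrix
representation. -/
noncomputable def lindbladTermS [Fintype m] [DecidableEq m] (L : Matrix m m ℂ) :
    Matrix (m × m) (m × m) ℂ :=
  sandwichS L Lᴴ - (1 / 2 : ℂ) • sandwichS (Lᴴ * L) 1 - (1 / 2 : ℂ) • sandwichS 1 (Lᴴ * L)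

/-- Tensor (Kronecker) product of two superoperators. -/
def kronS {m' : Type*} [Fintype m] [Fintype m'] (S : Matrix (m × m) (m × m) ℂ)
    (S' : Matrix (m' × m') (m' × m') ℂ) :
    Matrix ((m × m') × (m × m')) ((m × m') × (m × m')) ℂ :=
  Matrix.of fun p q =>
    S (p.1.1, p.2.1) (q.1.1, q.2.1) * S' (p.1.2, p.2.2) (q.1.2, q.2.2)

end Defs

/-- `n`-fold tensor power `S^{⊗n}` of a superoperator on `M_d`. -/
noncomputable def tensorPowS (n : ℕ) {d : ℕ} (S : Matrix (Fin d × Fin d) (Fin d × Fin d) ℂ) :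
    Matrix ((Fin n → Fin d) × (Fin n → Fin d)) ((Fin n → Fin d) × (Fin n → Fin d)) ℂ :=
  Matrix.of fun p q => ∏ i, S (p.1 i, p.2 i) (q.1 i, q.2 i)

/-- `n`-fold tensor power `ρ^{⊗n}` of a matrix. -/
noncomputable def tensorPowM (n : ℕ) {d : ℕ} (ρ : Matrix (Fin d) (Fin d) ℂ) :
    Matrix (Fin n → Fin d) (Fin n → Fin d) ℂ :=
  Matrix.of fun x y => ∏ i, ρ (x i) (y i)

/-- Tensor product `A 0 ⊗ A 1 ⊗ … ⊗ A (n-1)` of a family of matrices. -/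
noncomputable def tensorFamilyM {n d : ℕ} (A : Fin n → Matrix (Fin d) (Fin d) ℂ) :
    Matrix (Fin n → Fin d) (Fin n → Fin d) ℂ :=
  Matrix.of fun x y => ∏ i, A i (x i) (y i)

/-- The qubit amplitude damping Liouvillian with rate `γ`:
`ℒ(ρ) = γ(⟨1|ρ|1⟩|0⟩⟨0| − (1/2)|1⟩⟨1|ρ − (1/2)ρ|1⟩⟨1|)`, in matrix representation. -/
noncomputable def ampDampS (γ : ℝ) : Matrix (Fin 2 × Fin 2) (Fin 2 × Fin 2) ℂ :=
  (γ : ℂ) • (sandwichS (Matrix.single 0 1 1) (Matrix.single 1 0 1)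
    - (1 / 2 : ℂ) • sandwichS (Matrix.single 1 1 1) 1
    - (1 / 2 : ℂ) • sandwichS 1 (Matrix.single 1 1 1))

/-
`ℒ` is diagonalisable, and with `η = e^{-γt}` the channel `e^{tℒ}` sends `ρ` to
`[[ρ₀₀ + (1 - η)ρ₁₁, √η ρ₀₁], [√η ρ₁₀, η ρ₁₁]]`. Its difference with `|0⟩⟨0|` is a traceless
Hermitian matrix `X = [[-a, b], [b̄, a]]`, so `X†X = (a² + |b|²)·1` and
`d_tr = √(η² p² + η |ρ₀₁|²)` with `p = ρ₁₁`. Positivity of `ρ` gives `|ρ₀₁|² ≤ p(1 - p)`, with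
equality for pure states, so the supremum is the maximum of `η² p² + η p (1 - p)` over
`p ∈ [0, 1]`: it is attained at `p = 1` when `η ≥ 1/2` and at `p = 1/(2(1 - η))` otherwise.
-/

namespace Matrix

variable {n 𝕜 : Type*} [Fintype n] [DecidableEq n] [RCLike 𝕜]

lemma IsHermitian.eigenvalues_eq_of_eq_smul_one {A : Matrix n n 𝕜} (hA : A.IsHermitian)
    {c : ℝ} (h : A = (c : 𝕜) • 1) (i : n) : hA.eigenvalues i = c := by
  have hmul : ∀ v, A *ᵥ v = (c : 𝕜) • v := by simp [h, smul_mulVec]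
  rw [hA.eigenvalues_eq, hmul, dotProduct_smul, dotProduct_comm,
    ← EuclideanSpace.inner_eq_star_dotProduct]
  simp [inner_self_eq_norm_sq_to_K, hA.eigenvectorBasis.orthonormal.1 i]

lemma PosSemidef.sqrt_eq_smul_one {A : Matrix n n 𝕜} (hA : A.PosSemidef) {c : ℝ}
    (h : A = (c : 𝕜) • 1) : hA.sqrt = (√c : 𝕜) • 1 := by
  have hdiag : (diagonal ((↑) ∘ (√·) ∘ hA.1.eigenvalues) : Matrix n n 𝕜) = (√c : 𝕜) • 1 := by
    ext i j
    simp [diagonal_apply, hA.1.eigenvalues_eq_of_eq_smul_one h, one_apply]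
  rw [PosSemidef.sqrt, hdiag, Matrix.mul_smul, mul_one, Matrix.smul_mul,
    Unitary.mul_star_self_of_mem (SetLike.coe_mem _)]

end Matrix

lemma traceNorm_eq_of_conjTranspose_mul_self_eq_smul_one {n : Type*} [Fintype n] [DecidableEq n]
    {X : Matrix n n ℂ} {c : ℝ} (h : Xᴴ * X = (c : ℂ) • 1) :
    traceNorm X = Fintype.card n * √c := by
  simp [traceNorm, (posSemidef_conjTranspose_mul_self X).sqrt_eq_smul_one h, trace_smul, mul_comm]

lemma traceNorm_traceless_hermitian_fin_two (a : ℝ) (b : ℂ) :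
    traceNorm !![-(a : ℂ), b; star b, a] = 2 * √(a ^ 2 + Complex.normSq b) := by
  rw [traceNorm_eq_of_conjTranspose_mul_self_eq_smul_one (c := a ^ 2 + Complex.normSq b)]
  · simp
  ext i j
  fin_cases i <;> fin_cases j <;> apply Complex.ext <;>
    simp [Matrix.mul_apply, Fin.sum_univ_two, Complex.normSq_apply, sq] <;> ring

lemma IsDensityMatrix.fin_two_entry_bounds {ρ : Matrix (Fin 2) (Fin 2) ℂ}
    (hρ : IsDensityMatrix ρ) :
    0 ≤ (ρ 1 1).re ∧ (ρ 1 1).re ≤ 1 ∧ Complex.normSq (ρ 0 1) ≤ (1 - (ρ 1 1).re) * (ρ 1 1).re := by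
  obtain ⟨hpsd, htr⟩ := hρ
  have h00 : 0 ≤ (ρ 0 0).re := (Complex.nonneg_iff.mp hpsd.diag_nonneg).1
  have h11 : 0 ≤ (ρ 1 1).re := (Complex.nonneg_iff.mp hpsd.diag_nonneg).1
  have htr' : (ρ 0 0).re + (ρ 1 1).re = 1 := by
    simpa [trace_fin_two] using congrArg Complex.re htr
  have hdet : Complex.normSq (ρ 0 1) ≤ (ρ 0 0).re * (ρ 1 1).re := by
    have := (Complex.nonneg_iff.mp hpsd.det_nonneg).1
    rw [det_fin_two, ← hpsd.1.apply 1 0] at this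
    have h0 := hpsd.1.coe_re_apply_self 0
    have h1 := hpsd.1.coe_re_apply_self 1
    rw [← h0, ← h1] at this
    simpa [Complex.normSq_apply, Complex.mul_re] using this
  refine ⟨h11, by linarith, ?_⟩
  rwa [← htr', add_sub_cancel_right]

namespace AmplitudeDamping

noncomputable abbrev jumpS : Matrix (Fin 2 × Fin 2) (Fin 2 × Fin 2) ℂ :=
  single ((0 : Fin 2), (0 : Fin 2)) ((1 : Fin 2), (1 : Fin 2)) 1

noncomputable def eigenvalue (γ : ℝ) (p : Fin 2 × Fin 2) : ℂ :=
  -(γ / 2) * ((p.1 : ℕ) + (p.2 : ℕ) : ℂ)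

/- The eigenvectors of `ℒ` are `|0⟩⟨1|`, `|1⟩⟨0|` (eigenvalue `-γ/2`), `|0⟩⟨0|` (eigenvalue `0`)
and `|1⟩⟨1| - |0⟩⟨0|` (eigenvalue `-γ`): the columns of `1 - jumpS`, where `jumpS` is the
nilpotent superoperator `ρ ↦ ⟨1|ρ|1⟩ |0⟩⟨0|`, so that `(1 - jumpS)⁻¹ = 1 + jumpS`. -/
lemma ampDampS_eq_conj_diagonal (γ : ℝ) :
    ampDampS γ = (1 - jumpS) * diagonal (eigenvalue γ) * (1 + jumpS) := by
  ext ⟨i, j⟩ ⟨k, l⟩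
  fin_cases i <;> fin_cases j <;> fin_cases k <;> fin_cases l <;>
    simp [ampDampS, sandwichS, eigenvalue, Matrix.mul_apply, Fintype.sum_prod_type,
      Fin.sum_univ_two, Matrix.single, Matrix.one_apply, diagonal, Prod.ext_iff] <;> ring

lemma one_sub_jumpS_mul_one_add_jumpS : (1 - jumpS) * (1 + jumpS) = 1 := by
  simp [mul_add, sub_mul]

lemma expS_ampDampS (γ t : ℝ) :
    expS t (ampDampS γ) =
      (1 - jumpS) * diagonal (fun p => Complex.exp (t * eigenvalue γ p)) * (1 + jumpS) := by
  have hinv : (1 - jumpS)⁻¹ = 1 + jumpS := inv_eq_right_inv one_sub_jumpS_mul_one_add_jumpS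
  have hunit : IsUnit (1 - jumpS) := ⟨⟨_, _, one_sub_jumpS_mul_one_add_jumpS,
    mul_eq_one_comm.mp one_sub_jumpS_mul_one_add_jumpS⟩, rfl⟩
  rw [expS, ampDampS_eq_conj_diagonal, ← hinv, ← Matrix.smul_mul, ← Matrix.mul_smul,
    ← diagonal_smul, Matrix.exp_conj _ _ hunit, Matrix.exp_diagonal]
  congr
  ext p
  simp [Complex.exp_eq_exp_ℂ]

lemma appS_expS_ampDampS (γ t : ℝ) (ρ : Matrix (Fin 2) (Fin 2) ℂ) :
    appS (expS t (ampDampS γ)) ρ =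
      !![ρ 0 0 + (1 - Real.exp (-(γ * t))) * ρ 1 1, Real.exp (-(γ * t / 2)) * ρ 0 1;
        Real.exp (-(γ * t / 2)) * ρ 1 0, Real.exp (-(γ * t)) * ρ 1 1] := by
  rw [expS_ampDampS]
  ext i j
  fin_cases i <;> fin_cases j <;>
    simp [appS, eigenvalue, Matrix.mul_apply, Fintype.sum_prod_type, Fin.sum_univ_two,
      Matrix.single, Matrix.one_apply, diagonal, Prod.ext_iff] <;>
    exact Or.inl (by ring_nf)

/-- The squared trace distance to `|0⟩⟨0|` of a damped state, with `η = e^{-γt}`,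
`p = ⟨1|ρ|1⟩` and `n = |⟨0|ρ|1⟩|²`. -/
def distSq (η p n : ℝ) : ℝ := (η * p) ^ 2 + η * n

lemma trDist_appS_expS_ampDampS (γ t : ℝ) {ρ : Matrix (Fin 2) (Fin 2) ℂ} (hρ : ρ.IsHermitian)
    (htr : ρ.trace = 1) :
    trDist (appS (expS t (ampDampS γ)) ρ) (single 0 0 1) =
      √(distSq (Real.exp (-(γ * t))) (ρ 1 1).re (Complex.normSq (ρ 0 1))) := by
  obtain ⟨p, hp⟩ : ∃ p : ℝ, ρ 1 1 = p := ⟨_, (hρ.coe_re_apply_self 1).symm⟩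
  have h00 : ρ 0 0 = 1 - p := by
    rw [← htr, trace_fin_two, hp]
    ring
  set b : ℂ := Real.exp (-(γ * t / 2)) * ρ 0 1
  have hdiff : appS (expS t (ampDampS γ)) ρ - single 0 0 1 =
      !![-((Real.exp (-(γ * t)) * p : ℝ) : ℂ), b; star b, (Real.exp (-(γ * t)) * p : ℝ)] := by
    rw [appS_expS_ampDampS, h00, hp]
    ext i j
    fin_cases i <;> fin_cases j <;> simp [b, ← hρ.apply 0 1, -Complex.ofReal_exp]
    ring
  have hb : Complex.normSq b = Real.exp (-(γ * t)) * Complex.normSq (ρ 0 1) := by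
    rw [Complex.normSq_mul, Complex.normSq_ofReal, ← Real.exp_add]
    ring_nf
  rw [trDist, hdiff, traceNorm_traceless_hermitian_fin_two, hb, hp, Complex.ofReal_re, distSq]
  ring

lemma distSq_pure_le_sq {η p : ℝ} (hη : 1 / 2 ≤ η) (hη1 : η ≤ 1) (hp : p ≤ 1) :
    distSq η p ((1 - p) * p) ≤ η ^ 2 := by
  have hfactor : η ^ 2 - distSq η p ((1 - p) * p) = η * (1 - p) * ((η - 1) * p + η) := by
    rw [distSq]
    ring
  have hpos : 0 ≤ (η - 1) * p + η := by nlinarith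
  have : 0 ≤ η * (1 - p) * ((η - 1) * p + η) :=
    mul_nonneg (mul_nonneg (by linarith) (by linarith)) hpos
  linarith

lemma distSq_pure_le {η : ℝ} (hη : 0 ≤ η) (hη1 : η < 1) (p : ℝ) :
    distSq η p ((1 - p) * p) ≤ η / (4 * (1 - η)) := by
  have hfactor : η / (4 * (1 - η)) - distSq η p ((1 - p) * p) =
      η * (1 - 2 * (1 - η) * p) ^ 2 / (4 * (1 - η)) := by
    have : 1 - η ≠ 0 := by linarith
    rw [distSq]
    field_simp
    ring
  have : 0 ≤ η * (1 - 2 * (1 - η) * p) ^ 2 / (4 * (1 - η)) := by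
    have : 0 < 1 - η := by linarith
    positivity
  linarith

lemma distSq_pure_optimal {η : ℝ} (hη1 : η < 1) :
    distSq η (1 / (2 * (1 - η))) ((1 - 1 / (2 * (1 - η))) * (1 / (2 * (1 - η)))) =
      η / (4 * (1 - η)) := by
  have : 1 - η ≠ 0 := by linarith
  rw [distSq]
  field_simp
  ring

noncomputable def pureState (p : ℝ) : Matrix (Fin 2) (Fin 2) ℂ :=
  vecMulVec ![(√(1 - p) : ℂ), √p] (star ![(√(1 - p) : ℂ), √p])

lemma isDensityMatrix_pureState {p : ℝ} (hp₀ : 0 ≤ p) (hp₁ : p ≤ 1) :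
    IsDensityMatrix (pureState p) := by
  refine ⟨posSemidef_vecMulVec_self_star _, ?_⟩
  rw [trace_fin_two]
  simp [pureState, vecMulVec_apply, ← Complex.ofReal_mul, Real.mul_self_sqrt hp₀,
    Real.mul_self_sqrt (sub_nonneg.2 hp₁)]

lemma pureState_apply_one_one {p : ℝ} (hp₀ : 0 ≤ p) : (pureState p 1 1).re = p := by
  simp [pureState, vecMulVec_apply, ← Complex.ofReal_mul, Real.mul_self_sqrt hp₀]

lemma normSq_pureState_apply_zero_one {p : ℝ} (hp₀ : 0 ≤ p) (hp₁ : p ≤ 1) :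
    Complex.normSq (pureState p 0 1) = (1 - p) * p := by
  simp only [pureState, vecMulVec_apply]
  simp only [Fin.isValue, cons_val_zero, Pi.star_apply, cons_val_one, cons_val_fin_one,
    RCLike.star_def, Complex.conj_ofReal, ← Complex.ofReal_mul, Complex.normSq_ofReal]
  rw [mul_mul_mul_comm, Real.mul_self_sqrt hp₀, Real.mul_self_sqrt (sub_nonneg.2 hp₁)]

lemma iSup_trDist_eq {γ t v : ℝ} (hv : 0 ≤ v)
    (hle : ∀ p, 0 ≤ p → p ≤ 1 → distSq (Real.exp (-(γ * t))) p ((1 - p) * p) ≤ v ^ 2)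
    {p₀ : ℝ} (hp₀ : 0 ≤ p₀) (hp₀' : p₀ ≤ 1)
    (heq : distSq (Real.exp (-(γ * t))) p₀ ((1 - p₀) * p₀) = v ^ 2) :
    ⨆ ρ : {ρ : Matrix (Fin 2) (Fin 2) ℂ // IsDensityMatrix ρ},
      trDist (appS (expS t (ampDampS γ)) ρ.1) (single 0 0 1) = v := by
  have hbound : ∀ ρ : {ρ : Matrix (Fin 2) (Fin 2) ℂ // IsDensityMatrix ρ},
      trDist (appS (expS t (ampDampS γ)) ρ.1) (single 0 0 1) ≤ v := by
    rintro ⟨ρ, hρ⟩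
    obtain ⟨hp, hp', hn⟩ := hρ.fin_two_entry_bounds
    rw [trDist_appS_expS_ampDampS γ t hρ.1.1 hρ.2, Real.sqrt_le_left hv]
    refine le_trans ?_ (hle _ hp hp')
    rw [distSq, distSq]
    gcongr
  have hpure := isDensityMatrix_pureState hp₀ hp₀'
  have : Nonempty {ρ : Matrix (Fin 2) (Fin 2) ℂ // IsDensityMatrix ρ} := ⟨⟨_, hpure⟩⟩
  refine le_antisymm (ciSup_le hbound) ?_
  refine le_ciSup_of_le ⟨v, Set.forall_mem_range.2 hbound⟩ ⟨_, hpure⟩ (le_of_eq ?_)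
  rw [trDist_appS_expS_ampDampS γ t hpure.1.1 hpure.2, pureState_apply_one_one hp₀,
    normSq_pureState_apply_zero_one hp₀ hp₀', heq, Real.sqrt_sq hv]

end AmplitudeDamping

lemma half_le_exp_neg_mul_iff {γ t : ℝ} (hγ : 0 < γ) :
    1 / 2 ≤ Real.exp (-(γ * t)) ↔ t ≤ Real.log 2 / γ := by
  rw [le_div_iff₀ hγ, one_div, ← Real.exp_log (inv_pos.2 two_pos), Real.log_inv, Real.exp_le_exp]
  constructor <;> intro h <;> linarith

lemma exp_neg_mul_le_half_iff {γ t : ℝ} (hγ : 0 < γ) :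
    Real.exp (-(γ * t)) ≤ 1 / 2 ↔ Real.log 2 / γ ≤ t := by
  rw [div_le_iff₀ hγ, one_div, ← Real.exp_log (inv_pos.2 two_pos), Real.log_inv, Real.exp_le_exp]
  constructor <;> intro h <;> linarith

open AmplitudeDamping in
/-- **Exact contraction of the qubit amplitude damping semigroup.** -/
theorem amplitude_damping_contraction (γ : ℝ) (hγ : 0 < γ) :
    (∀ t : ℝ, 0 ≤ t → t ≤ Real.log 2 / γ →
      (⨆ ρ : {ρ : Matrix (Fin 2) (Fin 2) ℂ // IsDensityMatrix ρ},
          trDist (appS (expS t (ampDampS γ)) ρ.1) (Matrix.single 0 0 1)) =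
        Real.exp (-(γ * t))) ∧
    (∀ t : ℝ, Real.log 2 / γ ≤ t →
      (⨆ ρ : {ρ : Matrix (Fin 2) (Fin 2) ℂ // IsDensityMatrix ρ},
          trDist (appS (expS t (ampDampS γ)) ρ.1) (Matrix.single 0 0 1)) =
        Real.exp (-(γ * t / 2)) / Real.sqrt (4 * (1 - Real.exp (-(γ * t))))) := by
  constructor
  · intro t ht₀ ht
    have hη : 1 / 2 ≤ Real.exp (-(γ * t)) := (half_le_exp_neg_mul_iff hγ).2 ht
    have hη₁ : Real.exp (-(γ * t)) ≤ 1 := Real.exp_le_one_iff.2 (by nlinarith)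
    refine iSup_trDist_eq (Real.exp_pos _).le (fun p _ hp ↦ distSq_pure_le_sq hη hη₁ hp)
      zero_le_one le_rfl ?_
    rw [distSq]
    ring
  · intro t ht
    have hη : Real.exp (-(γ * t)) ≤ 1 / 2 := (exp_neg_mul_le_half_iff hγ).2 ht
    have hv : (Real.exp (-(γ * t / 2)) / √(4 * (1 - Real.exp (-(γ * t))))) ^ 2 =
        Real.exp (-(γ * t)) / (4 * (1 - Real.exp (-(γ * t)))) := by
      rw [div_pow, Real.sq_sqrt (by linarith), ← Real.exp_nat_mul]
      ring_nf
    refine iSup_trDist_eq (by positivity) (p₀ := 1 / (2 * (1 - Real.exp (-(γ * t)))))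
      (fun p _ _ ↦ hv ▸ distSq_pure_le (Real.exp_pos _).le (by linarith) p)
      (div_nonneg zero_le_one (by linarith)) ?_ (hv ▸ distSq_pure_optimal (by linarith))
    rw [div_le_one (by linarith)]
    linarith
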